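/- For n ≥ 1, let Dₙ be the union of all full fundamental intervals Δ(w) of rank n such that Δ(w′) is non-full for every nonempty proper prefix w′ of w. Then the sets Dₙ, n ≥ 1, are pairwise disjoint and λ(⋃_{n≥1} Dₙ) = Σ_{n≥1} λ(Dₙ) = λ([0, a₁)) = a₁; in particular, Lebesgue-almost every point of [0, a₁) lies in some full fundamental interval. -/

import Mathlib

/-!
By induction on `w`, every cylinder `Δ(w)` of rank `n` is an interval `[l, l + t / βⁿ)` with
`t ≤ a₁`, mapped by `Tⁿ` affinely onto `[0, t)`; it is full exactly when `t = a₁`. Appending a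
digit `b` with `Δ(b) = [b / β, v)` replaces `t` by `β min(t, v) - b`. So a non-full cylinder
with `t ≤ a₂ / β` has at most one non-full child, and otherwise its two non-full children have
total rescaled length `β t - a₁`. Hence the potential `∑_{w ∈ Bₙ} (λ(Δ(w)) + a₁ / (2 βⁿ))`, where
the constant term pays for the splitting words, decays geometrically. Since the points of
`[0, a₁)` lying in no full cylinder of rank `≤ n` are covered by the cylinders of `Bₙ`, the sets
`Dₙ` exhaust `[0, a₁)` up to a null set. They are disjoint because a full cylinder of rank `m`
containing `x` is the rank-`m` prefix cylinder of every longer word whose cylinder contains `x`.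
-/

open MeasureTheory Set

/-- The greedy β-transformation with deleted digit set `{0, a₁, a₂}`:
`T x = βx` on `Δ(0) = [0, a₁/β)`, `T x = βx − a₁` on `Δ(a₁) = [a₁/β, a₂/β)`,
and `T x = βx − a₂` on `Δ(a₂) = [a₂/β, a₁)`. -/
noncomputable def greedyT (β a₁ a₂ : ℝ) (x : ℝ) : ℝ :=
  if x < a₁ / β then β * x
  else if x < a₂ / β then β * x - a₁
  else β * x - a₂

/-- The interval `Δ(b)` associated to a digit `b ∈ {0, a₁, a₂}`. -/
noncomputable def digitInt (β a₁ a₂ : ℝ) (b : ℝ) : Set ℝ :=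
  if b = 0 then Set.Ico 0 (a₁ / β)
  else if b = a₁ then Set.Ico (a₁ / β) (a₂ / β)
  else Set.Ico (a₂ / β) a₁

/-- The fundamental interval `Δ(w) = ⋂_{k < n} T⁻ᵏ Δ(b_k)` of a word
`w = (b₀, …, b_{n−1})`. -/
noncomputable def cyl (β a₁ a₂ : ℝ) (w : List ℝ) : Set ℝ :=
  ⋂ k ∈ Finset.range w.length,
    (greedyT β a₁ a₂)^[k] ⁻¹' digitInt β a₁ a₂ (w.getD k 0)

/-- `w` is a word over the alphabet `A = {0, a₁, a₂}`. -/
def isWord (a₁ a₂ : ℝ) (w : List ℝ) : Prop := ∀ b ∈ w, b = 0 ∨ b = a₁ ∨ b = a₂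

/-- The fundamental interval `Δ(w)` is full: `λ(Δ(w)) = a₁/β^|w|`. -/
def isFull (β a₁ a₂ : ℝ) (w : List ℝ) : Prop :=
  volume (cyl β a₁ a₂ w) = ENNReal.ofReal (a₁ / β ^ w.length)

/-- Condition (6): `a₁ · max (β−1) 1 < a₂ < a₁ · min 2 β`. -/
def condition6 (β a₁ a₂ : ℝ) : Prop :=
  a₁ * max (β - 1) 1 < a₂ ∧ a₂ < a₁ * min 2 β

/-- `w ∈ Bₙ`: `w` is a word of length `n` over `A` with `λ(Δ(w)) > 0`, `Δ(w)`
non-full, and `Δ(w′)` non-full for every nonempty proper prefix `w′` of `w`. -/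
def memB (β a₁ a₂ : ℝ) (n : ℕ) (w : List ℝ) : Prop :=
  w.length = n ∧ isWord a₁ a₂ w ∧ 0 < volume (cyl β a₁ a₂ w) ∧
    ¬ isFull β a₁ a₂ w ∧
    ∀ w' : List ℝ, w' ≠ [] → w' <+: w → w' ≠ w → ¬ isFull β a₁ a₂ w'

/-- `κ(n)`: the number of elements of `Bₙ`. -/
noncomputable def kappa (β a₁ a₂ : ℝ) (n : ℕ) : ℕ :=
  {w : List ℝ | memB β a₁ a₂ n w}.ncard

/-- `Dₙ`: the union of all full fundamental intervals `Δ(w)` of rank `n` such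
that `Δ(w′)` is non-full for every nonempty proper prefix `w′` of `w`. -/
noncomputable def Dset (β a₁ a₂ : ℝ) (n : ℕ) : Set ℝ :=
  ⋃ w ∈ {w : List ℝ | w.length = n ∧ isWord a₁ a₂ w ∧ isFull β a₁ a₂ w ∧
      ∀ w' : List ℝ, w' ≠ [] → w' <+: w → w' ≠ w → ¬ isFull β a₁ a₂ w'},
    cyl β a₁ a₂ w


open Filter Topology
open scoped ENNReal

structure Admissible (β a₁ a₂ : ℝ) : Prop where
  one_lt : 1 < β
  pos : 0 < a₁
  lt : a₁ < a₂
  le_two_mul : a₂ ≤ 2 * a₁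
  le_mul : a₂ ≤ β * a₁
  mul_le_add : β * a₁ ≤ a₁ + a₂

namespace Admissible

variable {β a₁ a₂ : ℝ}

theorem of_condition6 (hβ1 : 1 < β) (ha₁ : 0 < a₁) (h12 : a₁ < a₂)
    (hc : condition6 β a₁ a₂) : Admissible β a₁ a₂ where
  one_lt := hβ1
  pos := ha₁
  lt := h12
  le_two_mul := by nlinarith [hc.2, min_le_left 2 β]
  le_mul := by nlinarith [hc.2, min_le_right 2 β]
  mul_le_add := by nlinarith [hc.1, le_max_left (β - 1) 1]

theorem beta_pos (H : Admissible β a₁ a₂) : 0 < β := zero_lt_one.trans H.one_lt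

theorem a₁_div_lt_a₂_div (H : Admissible β a₁ a₂) : a₁ / β < a₂ / β :=
  div_lt_div_of_pos_right H.lt H.beta_pos

theorem a₂_div_le (H : Admissible β a₁ a₂) : a₂ / β ≤ a₁ :=
  (div_le_iff₀ H.beta_pos).2 (by linarith [H.le_mul])

theorem nonneg_of_digit (H : Admissible β a₁ a₂) {b : ℝ} (hb : b = 0 ∨ b = a₁ ∨ b = a₂) :
    0 ≤ b := by
  rcases hb with rfl | rfl | rfl
  exacts [le_rfl, H.pos.le, H.pos.le.trans H.lt.le]

end Admissible

section Digits

variable {β a₁ a₂ : ℝ}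

theorem digitInt_zero : digitInt β a₁ a₂ 0 = Ico 0 (a₁ / β) := if_pos rfl

theorem digitInt_a₁ (H : Admissible β a₁ a₂) : digitInt β a₁ a₂ a₁ = Ico (a₁ / β) (a₂ / β) := by
  rw [digitInt, if_neg H.pos.ne', if_pos rfl]

theorem digitInt_a₂ (H : Admissible β a₁ a₂) : digitInt β a₁ a₂ a₂ = Ico (a₂ / β) a₁ := by
  rw [digitInt, if_neg (H.pos.trans H.lt).ne', if_neg H.lt.ne']

theorem exists_digitInt_eq_Ico (H : Admissible β a₁ a₂) {b : ℝ} (hb : b = 0 ∨ b = a₁ ∨ b = a₂) :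
    ∃ v, digitInt β a₁ a₂ b = Ico (b / β) v ∧ v ≤ a₁ ∧ β * v - b ≤ a₁ := by
  have hβ := H.beta_pos.ne'
  rcases hb with rfl | rfl | rfl
  · refine ⟨a₁ / β, by rw [zero_div, digitInt_zero], ?_, ?_⟩
    · exact div_le_self H.pos.le H.one_lt.le
    · rw [mul_div_cancel₀ _ hβ]; linarith
  · refine ⟨a₂ / β, digitInt_a₁ H, H.a₂_div_le, ?_⟩
    rw [mul_div_cancel₀ _ hβ]; linarith [H.le_two_mul]
  · exact ⟨a₁, digitInt_a₂ H, le_rfl, by linarith [H.mul_le_add]⟩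

theorem digitInt_subset_Ico (H : Admissible β a₁ a₂) {b : ℝ} (hb : b = 0 ∨ b = a₁ ∨ b = a₂) :
    digitInt β a₁ a₂ b ⊆ Ico 0 a₁ := by
  obtain ⟨v, hv, hva, -⟩ := exists_digitInt_eq_Ico H hb
  exact hv ▸ Ico_subset_Ico (div_nonneg (H.nonneg_of_digit hb) H.beta_pos.le) hva

theorem greedyT_of_mem_digitInt (H : Admissible β a₁ a₂) {b y : ℝ} (hb : b = 0 ∨ b = a₁ ∨ b = a₂)
    (hy : y ∈ digitInt β a₁ a₂ b) : greedyT β a₁ a₂ y = β * y - b := by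
  have := H.a₁_div_lt_a₂_div
  rcases hb with rfl | rfl | rfl
  · rw [digitInt_zero, mem_Ico] at hy; simp [greedyT, hy.2]
  · rw [digitInt_a₁ H, mem_Ico] at hy; simp [greedyT, hy.1, hy.2]
  · rw [digitInt_a₂ H, mem_Ico] at hy
    simp [greedyT, hy.1, (this.trans_le hy.1).not_gt]

theorem eq_of_mem_digitInt (H : Admissible β a₁ a₂) {b b' y : ℝ}
    (hb : b = 0 ∨ b = a₁ ∨ b = a₂) (hb' : b' = 0 ∨ b' = a₁ ∨ b' = a₂)
    (hy : y ∈ digitInt β a₁ a₂ b) (hy' : y ∈ digitInt β a₁ a₂ b') : b = b' := by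
  have := H.a₁_div_lt_a₂_div
  rcases hb with rfl | rfl | rfl <;> rcases hb' with rfl | rfl | rfl <;>
    simp only [digitInt_zero, digitInt_a₁ H, digitInt_a₂ H, mem_Ico] at hy hy' <;>
    first | rfl | linarith

theorem exists_mem_digitInt (H : Admissible β a₁ a₂) {y : ℝ} (hy : y ∈ Ico 0 a₁) :
    ∃ b, (b = 0 ∨ b = a₁ ∨ b = a₂) ∧ y ∈ digitInt β a₁ a₂ b := by
  rcases lt_or_ge y (a₁ / β) with h1 | h1
  · exact ⟨0, Or.inl rfl, digitInt_zero ▸ ⟨hy.1, h1⟩⟩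
  rcases lt_or_ge y (a₂ / β) with h2 | h2
  · exact ⟨a₁, Or.inr (Or.inl rfl), digitInt_a₁ H ▸ ⟨h1, h2⟩⟩
  · exact ⟨a₂, Or.inr (Or.inr rfl), digitInt_a₂ H ▸ ⟨h2, hy.2⟩⟩

theorem mapsTo_greedyT (H : Admissible β a₁ a₂) :
    MapsTo (greedyT β a₁ a₂) (Ico 0 a₁) (Ico 0 a₁) := by
  intro y hy
  obtain ⟨b, hb, hyb⟩ := exists_mem_digitInt H hy
  obtain ⟨v, hv, -, hvb⟩ := exists_digitInt_eq_Ico H hb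
  rw [greedyT_of_mem_digitInt H hb hyb, mem_Ico]
  rw [hv, mem_Ico, div_le_iff₀' H.beta_pos] at hyb
  constructor <;> nlinarith [H.beta_pos]

end Digits

section Cylinders

variable {β a₁ a₂ : ℝ}

theorem mem_cyl {w : List ℝ} {x : ℝ} :
    x ∈ cyl β a₁ a₂ w ↔
      ∀ k < w.length, (greedyT β a₁ a₂)^[k] x ∈ digitInt β a₁ a₂ (w.getD k 0) := by
  simp [cyl]

theorem cyl_nil : cyl β a₁ a₂ [] = univ := by simp [cyl]

theorem cyl_append_singleton (w : List ℝ) (b : ℝ) :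
    cyl β a₁ a₂ (w ++ [b]) =
      cyl β a₁ a₂ w ∩ (greedyT β a₁ a₂)^[w.length] ⁻¹' digitInt β a₁ a₂ b := by
  ext x
  simp only [mem_cyl, mem_inter_iff, mem_preimage, List.length_append, List.length_singleton,
    Nat.lt_succ_iff_lt_or_eq, or_imp, forall_and, forall_eq]
  refine and_congr (forall₂_congr fun k hk => ?_) ?_
  · rw [List.getD_append _ _ _ _ hk]
  · simp

theorem cyl_subset_of_prefix {w v : List ℝ} (h : w <+: v) : cyl β a₁ a₂ v ⊆ cyl β a₁ a₂ w := by
  obtain ⟨u, rfl⟩ := h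
  intro x hx
  rw [mem_cyl] at hx ⊢
  intro k hk
  have := hx k (by simp; omega)
  rwa [List.getD_append _ _ _ _ hk] at this

theorem cyl_subset_Ico (H : Admissible β a₁ a₂) {w : List ℝ} (hw : isWord a₁ a₂ w)
    (hne : w ≠ []) : cyl β a₁ a₂ w ⊆ Ico 0 a₁ := by
  obtain ⟨b, u, rfl⟩ := List.exists_cons_of_ne_nil hne
  calc cyl β a₁ a₂ (b :: u) ⊆ cyl β a₁ a₂ [b] := cyl_subset_of_prefix (by simp)
    _ = digitInt β a₁ a₂ b := by simp [cyl]
    _ ⊆ Ico 0 a₁ := digitInt_subset_Ico H (hw b (by simp))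

theorem eq_of_mem_cyl (H : Admissible β a₁ a₂) {w v : List ℝ} (hw : isWord a₁ a₂ w)
    (hv : isWord a₁ a₂ v) (hl : w.length = v.length) {x : ℝ}
    (hxw : x ∈ cyl β a₁ a₂ w) (hxv : x ∈ cyl β a₁ a₂ v) : w = v := by
  refine List.ext_getElem hl fun k hkw hkv => ?_
  have h₁ := mem_cyl.1 hxw k hkw
  have h₂ := mem_cyl.1 hxv k hkv
  rw [List.getD_eq_getElem _ _ hkw] at h₁
  rw [List.getD_eq_getElem _ _ hkv] at h₂
  exact eq_of_mem_digitInt H (hw _ (List.getElem_mem hkw)) (hv _ (List.getElem_mem hkv)) h₁ h₂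

theorem exists_mem_cyl (H : Admissible β a₁ a₂) {x : ℝ} (hx : x ∈ Ico 0 a₁) (n : ℕ) :
    ∃ w, w.length = n ∧ isWord a₁ a₂ w ∧ x ∈ cyl β a₁ a₂ w := by
  induction n with
  | zero => exact ⟨[], rfl, by simp [isWord], by simp [cyl_nil]⟩
  | succ n ih =>
    obtain ⟨w, hlen, hw, hxw⟩ := ih
    obtain ⟨b, hb, hxb⟩ :=
      exists_mem_digitInt H ((mapsTo_greedyT H).iterate w.length hx)
    refine ⟨w ++ [b], by simp [hlen], ?_, ?_⟩
    · simpa [isWord, or_imp, forall_and] using And.intro hw hb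
    · rw [cyl_append_singleton]
      exact ⟨hxw, hxb⟩

end Cylinders

theorem Ico_inter_preimage_Ico_of_affine {f : ℝ → ℝ} {l t c u v : ℝ} (hc : 0 < c) (hu : 0 ≤ u)
    (hf : ∀ x ∈ Ico l (l + t / c), f x = c * (x - l)) :
    Ico l (l + t / c) ∩ f ⁻¹' Ico u v = Ico (l + u / c) (l + min t v / c) := by
  have lt_iff (x s : ℝ) : x < l + s / c ↔ c * (x - l) < s := by
    rw [← sub_lt_iff_lt_add', lt_div_iff₀' hc]
  have le_iff (x : ℝ) : l + u / c ≤ x ↔ u ≤ c * (x - l) := by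
    rw [← le_sub_iff_add_le', div_le_iff₀' hc]
  ext x
  constructor
  · rintro ⟨hx, hfx⟩
    rw [mem_preimage, hf x hx, mem_Ico] at hfx
    rw [mem_Ico, lt_iff] at hx
    rw [mem_Ico, le_iff, lt_iff, lt_min_iff]
    exact ⟨hfx.1, hx.2, hfx.2⟩
  · rintro ⟨h₁, h₂⟩
    rw [le_iff] at h₁
    rw [lt_iff, lt_min_iff] at h₂
    have hx : x ∈ Ico l (l + t / c) :=
      ⟨by nlinarith, (lt_iff x t).2 h₂.1⟩
    exact ⟨hx, by rw [mem_preimage, hf x hx]; exact ⟨h₁, h₂.2⟩⟩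

section Shape

variable {β a₁ a₂ : ℝ}

/-- Intersecting with `[0, a₁)` lets the empty word (`l = 0`, `t = a₁`) start the induction. -/
structure CylShape (β a₁ a₂ : ℝ) (w : List ℝ) (l t : ℝ) : Prop where
  le : t ≤ a₁
  inter_eq : cyl β a₁ a₂ w ∩ Ico 0 a₁ = Ico l (l + t / β ^ w.length)
  iterate_eq : ∀ x ∈ cyl β a₁ a₂ w ∩ Ico 0 a₁,
    (greedyT β a₁ a₂)^[w.length] x = β ^ w.length * (x - l)

theorem cylShape_nil : CylShape β a₁ a₂ [] 0 a₁ where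
  le := le_rfl
  inter_eq := by simp [cyl_nil]
  iterate_eq x _ := by simp

theorem CylShape.append_singleton (H : Admissible β a₁ a₂) {w : List ℝ} {l t b v : ℝ}
    (hw : CylShape β a₁ a₂ w l t) (hb : b = 0 ∨ b = a₁ ∨ b = a₂)
    (hv : digitInt β a₁ a₂ b = Ico (b / β) v) (hvb : β * v - b ≤ a₁) :
    ∃ l', CylShape β a₁ a₂ (w ++ [b]) l' (β * min t v - b) := by
  have hβ := H.beta_pos
  have hβn : 0 < β ^ w.length := pow_pos hβ _
  have hb0 : 0 ≤ b / β := div_nonneg (H.nonneg_of_digit hb) hβ.le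
  have hinter : cyl β a₁ a₂ (w ++ [b]) ∩ Ico 0 a₁ =
      (cyl β a₁ a₂ w ∩ Ico 0 a₁) ∩ (greedyT β a₁ a₂)^[w.length] ⁻¹' digitInt β a₁ a₂ b := by
    rw [cyl_append_singleton]; exact inter_right_comm _ _ _
  refine ⟨l + b / β / β ^ w.length, ?_, ?_, ?_⟩
  · nlinarith [min_le_right t v]
  · rw [hinter, hw.inter_eq, hv, Ico_inter_preimage_Ico_of_affine hβn hb0
      (fun x hx => hw.iterate_eq x (hw.inter_eq ▸ hx))]
    congr 1
    rw [List.length_append, List.length_singleton, pow_succ]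
    field_simp
    ring
  · intro x hx
    rw [hinter] at hx
    rw [List.length_append, List.length_singleton, Function.iterate_succ_apply',
      greedyT_of_mem_digitInt H hb hx.2, hw.iterate_eq x hx.1, pow_succ]
    field_simp
    ring

theorem exists_cylShape (H : Admissible β a₁ a₂) {w : List ℝ} (hw : isWord a₁ a₂ w) :
    ∃ l t, CylShape β a₁ a₂ w l t := by
  induction w using List.reverseRecOn with
  | nil => exact ⟨0, a₁, cylShape_nil⟩
  | append_singleton w b ih =>
    have hb : b = 0 ∨ b = a₁ ∨ b = a₂ := hw b (by simp)
    obtain ⟨l, t, hs⟩ := ih fun c hc => hw c (by simp [hc])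
    obtain ⟨v, hv, -, hvb⟩ := exists_digitInt_eq_Ico H hb
    obtain ⟨l', hs'⟩ := hs.append_singleton H hb hv hvb
    exact ⟨l', _, hs'⟩

theorem CylShape.cyl_eq (H : Admissible β a₁ a₂) {w : List ℝ} {l t : ℝ}
    (hs : CylShape β a₁ a₂ w l t) (hw : isWord a₁ a₂ w) (hne : w ≠ []) :
    cyl β a₁ a₂ w = Ico l (l + t / β ^ w.length) := by
  rw [← hs.inter_eq, inter_eq_left.2 (cyl_subset_Ico H hw hne)]

theorem CylShape.volume_eq (H : Admissible β a₁ a₂) {w : List ℝ} {l t : ℝ}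
    (hs : CylShape β a₁ a₂ w l t) (hw : isWord a₁ a₂ w) (hne : w ≠ []) :
    volume (cyl β a₁ a₂ w) = ENNReal.ofReal (t / β ^ w.length) := by
  rw [hs.cyl_eq H hw hne, Real.volume_Ico, add_sub_cancel_left]

theorem volume_cyl_pos (H : Admissible β a₁ a₂) {w : List ℝ} (hw : isWord a₁ a₂ w)
    (hne : w ≠ []) {x : ℝ} (hx : x ∈ cyl β a₁ a₂ w) : 0 < volume (cyl β a₁ a₂ w) := by
  obtain ⟨l, t, hs⟩ := exists_cylShape H hw
  rw [hs.cyl_eq H hw hne] at hx ⊢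
  rw [Real.volume_Ico, ENNReal.ofReal_pos, sub_pos]
  exact hx.1.trans_lt hx.2

end Shape

section Potential

variable {β a₁ a₂ : ℝ}

open Classical in
noncomputable def weight (β a₁ a₂ : ℝ) (n : ℕ) (w : List ℝ) : ℝ≥0∞ :=
  if memB β a₁ a₂ n w then volume (cyl β a₁ a₂ w) + ENNReal.ofReal (a₁ / 2 / β ^ n) else 0

noncomputable def potential (β a₁ a₂ : ℝ) (n : ℕ) : ℝ≥0∞ := ∑' w, weight β a₁ a₂ n w

theorem volume_cyl_le_weight {n : ℕ} {w : List ℝ} (hB : memB β a₁ a₂ n w) :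
    volume (cyl β a₁ a₂ w) ≤ weight β a₁ a₂ n w := by
  rw [weight, if_pos hB]
  exact le_self_add

/-- A word of rank `n` whose cylinder is `[l, l + t / βⁿ)` has `weight` at most
`scaledWeight a₁ t / βⁿ`, with equality on `Bₙ`. -/
noncomputable def scaledWeight (a₁ t : ℝ) : ℝ := if 0 < t ∧ t < a₁ then t + a₁ / 2 else 0

theorem scaledWeight_nonneg (a₁ t : ℝ) : 0 ≤ scaledWeight a₁ t := by
  unfold scaledWeight; split_ifs with h
  · linarith [h.1, h.2]
  · exact le_rfl

theorem scaledWeight_of_nonpos {a₁ t : ℝ} (ht : t ≤ 0) : scaledWeight a₁ t = 0 :=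
  if_neg fun h => h.1.not_ge ht

theorem scaledWeight_self (a₁ : ℝ) : scaledWeight a₁ a₁ = 0 := if_neg fun h => h.2.false

theorem scaledWeight_le {a₁ t : ℝ} (ha : 0 ≤ a₁) (ht : 0 ≤ t) : scaledWeight a₁ t ≤ t + a₁ / 2 := by
  unfold scaledWeight; split_ifs
  · exact le_rfl
  · positivity

theorem scaledWeight_of_pos_of_lt {a₁ t : ℝ} (ht : 0 < t) (hta : t < a₁) :
    scaledWeight a₁ t = t + a₁ / 2 := if_pos ⟨ht, hta⟩

noncomputable def contractionRate (β : ℝ) : ℝ := max (3 / (2 + β)) (2 / 3)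

theorem contractionRate_nonneg (β : ℝ) : 0 ≤ contractionRate β :=
  le_max_of_le_right (by norm_num)

theorem contractionRate_lt_one {β : ℝ} (hβ : 1 < β) : contractionRate β < 1 :=
  max_lt ((div_lt_one (by linarith)).2 (by linarith)) (by norm_num)

theorem scaledWeight_children_le (H : Admissible β a₁ a₂) {t : ℝ} (ht : 0 < t) (hta : t < a₁) :
    scaledWeight a₁ (β * min t (a₁ / β) - 0) + scaledWeight a₁ (β * min t (a₂ / β) - a₁) +
        scaledWeight a₁ (β * min t a₁ - a₂) ≤ contractionRate β * (β * (t + a₁ / 2)) := by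
  have hβ := H.beta_pos
  have ha := H.pos
  have e₁ : β * (a₁ / β) = a₁ := mul_div_cancel₀ _ hβ.ne'
  have e₂ : β * (a₂ / β) = a₂ := mul_div_cancel₀ _ hβ.ne'
  set X := β * (t + a₁ / 2) with hX
  have hX0 : 0 ≤ X := by positivity
  have le_of_three (y : ℝ) (hy : y * (2 + β) ≤ 3 * X) : y ≤ contractionRate β * X :=
    calc y ≤ 3 * X / (2 + β) := (le_div_iff₀ (by linarith)).2 hy
      _ = 3 / (2 + β) * X := by ring
      _ ≤ contractionRate β * X := mul_le_mul_of_nonneg_right (le_max_left _ _) hX0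
  have le_of_two (y : ℝ) (hy : 3 * y ≤ 2 * X) : y ≤ contractionRate β * X :=
    calc y ≤ 2 / 3 * X := by linarith
      _ ≤ contractionRate β * X := mul_le_mul_of_nonneg_right (le_max_right _ _) hX0
  rw [min_eq_left hta.le]
  rcases le_or_gt t (a₁ / β) with h₁ | h₁
  · have hβt : β * t ≤ a₁ := by rwa [le_div_iff₀' hβ] at h₁
    rw [min_eq_left h₁, min_eq_left (h₁.trans H.a₁_div_lt_a₂_div.le),
      scaledWeight_of_nonpos (t := β * t - a₁) (by linarith),
      scaledWeight_of_nonpos (t := β * t - a₂) (by linarith [H.lt]), add_zero, add_zero]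
    refine (scaledWeight_le ha.le (by linarith [mul_pos hβ ht])).trans (le_of_three _ ?_)
    nlinarith [mul_nonneg (sub_nonneg.2 H.one_lt.le) (sub_nonneg.2 hβt)]
  rcases le_or_gt t (a₂ / β) with h₂ | h₂
  · have hβt : a₁ < β * t := by rwa [div_lt_iff₀' hβ] at h₁
    have hβt' : β * t ≤ a₂ := by rwa [le_div_iff₀' hβ] at h₂
    rw [min_eq_right h₁.le, e₁, sub_zero, scaledWeight_self, min_eq_left h₂,
      scaledWeight_of_nonpos (t := β * t - a₂) (by linarith), zero_add, add_zero]
    refine (scaledWeight_le ha.le (by linarith)).trans (le_of_three _ ?_)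
    nlinarith [mul_nonneg (sub_nonneg.2 H.one_lt.le)
      (by linarith [H.le_two_mul] : 0 ≤ 2 * a₁ - β * t)]
  · have hβt : a₂ < β * t := by rwa [div_lt_iff₀' hβ] at h₂
    rw [min_eq_right h₁.le, e₁, sub_zero, scaledWeight_self, min_eq_right h₂.le, e₂, zero_add]
    have hw₁ := scaledWeight_le ha.le (by linarith [H.lt] : 0 ≤ a₂ - a₁)
    have hw₂ := scaledWeight_le ha.le (by linarith : 0 ≤ β * t - a₂)
    refine le_of_two _ ?_
    nlinarith [mul_lt_mul_of_pos_left hta hβ]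


theorem CylShape.isFull_of_eq (H : Admissible β a₁ a₂) {w : List ℝ} {l t : ℝ}
    (hs : CylShape β a₁ a₂ w l t) (hw : isWord a₁ a₂ w) (hne : w ≠ []) (ht : t = a₁) :
    isFull β a₁ a₂ w :=
  ht ▸ hs.volume_eq H hw hne

theorem CylShape.weight_eq_of_memB (H : Admissible β a₁ a₂) {n : ℕ} {w : List ℝ} {l t : ℝ}
    (hs : CylShape β a₁ a₂ w l t) (hB : memB β a₁ a₂ n w) (hne : w ≠ []) :
    0 < t ∧ t < a₁ ∧ weight β a₁ a₂ n w = ENNReal.ofReal ((t + a₁ / 2) / β ^ n) := by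
  have hβn : 0 < β ^ n := pow_pos H.beta_pos _
  have hvol := hB.1 ▸ hs.volume_eq H hB.2.1 hne
  have ht : 0 < t := by
    simpa [hvol, div_pos_iff_of_pos_right hβn] using hB.2.2.1
  have hta : t < a₁ :=
    hs.le.lt_of_ne fun h => hB.2.2.2.1 (hs.isFull_of_eq H hB.2.1 hne h)
  refine ⟨ht, hta, ?_⟩
  rw [weight, if_pos hB, hvol, ← ENNReal.ofReal_add (by positivity) (by positivity [H.pos]),
    add_div]

theorem CylShape.weight_le (H : Admissible β a₁ a₂) {n : ℕ} {w : List ℝ} {l t : ℝ}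
    (hs : CylShape β a₁ a₂ w l t) (hne : w ≠ []) :
    weight β a₁ a₂ n w ≤ ENNReal.ofReal (scaledWeight a₁ t / β ^ n) := by
  by_cases hB : memB β a₁ a₂ n w
  · obtain ⟨ht, hta, hweight⟩ := hs.weight_eq_of_memB H hB hne
    rw [hweight, scaledWeight_of_pos_of_lt ht hta]
  · simp [weight, hB]

theorem memB_of_weight_ne_zero {n : ℕ} {w : List ℝ} (h : weight β a₁ a₂ n w ≠ 0) :
    memB β a₁ a₂ n w := by
  by_contra hB; exact h (by simp [weight, hB])

theorem memB_of_append_singleton {n : ℕ} (hn : 1 ≤ n) {w : List ℝ} {b : ℝ}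
    (h : memB β a₁ a₂ (n + 1) (w ++ [b])) : memB β a₁ a₂ n w := by
  obtain ⟨hlen, hw, hpos, -, hpre⟩ := h
  have hlen' : w.length = n := by simpa using hlen
  have hprefix : w <+: w ++ [b] := List.prefix_append _ _
  have hne_append (w' : List ℝ) (h : w'.length ≤ n) : w' ≠ w ++ [b] := by
    rintro rfl; simp at h hlen; omega
  refine ⟨hlen', fun c hc => hw c (hprefix.subset hc),
    hpos.trans_le (measure_mono (cyl_subset_of_prefix hprefix)),
    hpre w (List.ne_nil_of_length_pos (by omega)) hprefix (hne_append w hlen'.le),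
    fun w' hne hw' _ => hpre w' hne (hw'.trans hprefix) (hne_append w' (hlen' ▸ hw'.length_le))⟩

theorem CylShape.weight_append_singleton_le (H : Admissible β a₁ a₂) {w : List ℝ} {l t b v : ℝ}
    (hs : CylShape β a₁ a₂ w l t) (hb : b = 0 ∨ b = a₁ ∨ b = a₂)
    (hv : digitInt β a₁ a₂ b = Ico (b / β) v) (hvb : β * v - b ≤ a₁) {n : ℕ} :
    weight β a₁ a₂ n (w ++ [b]) ≤ ENNReal.ofReal (scaledWeight a₁ (β * min t v - b) / β ^ n) := by
  obtain ⟨l', hs'⟩ := hs.append_singleton H hb hv hvb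
  exact hs'.weight_le H (by simp)

theorem tsum_weight_append_singleton (H : Admissible β a₁ a₂) (n : ℕ) (w : List ℝ) :
    ∑' b, weight β a₁ a₂ n (w ++ [b]) =
      weight β a₁ a₂ n (w ++ [0]) + weight β a₁ a₂ n (w ++ [a₁]) +
        weight β a₁ a₂ n (w ++ [a₂]) := by
  have hsupp : ∀ b ∉ ({0, a₁, a₂} : Finset ℝ), weight β a₁ a₂ n (w ++ [b]) = 0 := by
    intro b hb
    by_contra h
    exact hb (by simpa using (memB_of_weight_ne_zero h).2.1 b (by simp))
  rw [tsum_eq_sum hsupp, Finset.sum_insert (by simp [H.pos.ne, (H.pos.trans H.lt).ne]),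
    Finset.sum_pair H.lt.ne, add_assoc]

theorem tsum_weight_append_singleton_le (H : Admissible β a₁ a₂) {n : ℕ} (hn : 1 ≤ n)
    (w : List ℝ) :
    ∑' b, weight β a₁ a₂ (n + 1) (w ++ [b]) ≤
      ENNReal.ofReal (contractionRate β) * weight β a₁ a₂ n w := by
  by_cases hB : memB β a₁ a₂ n w
  swap
  · have hzero (b : ℝ) : weight β a₁ a₂ (n + 1) (w ++ [b]) = 0 := by
      by_contra h; exact hB (memB_of_append_singleton hn (memB_of_weight_ne_zero h))
    simp [hzero]
  have hβ := H.beta_pos.ne'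
  obtain ⟨l, t, hs⟩ := exists_cylShape H hB.2.1
  obtain ⟨ht, hta, hweight⟩ :=
    hs.weight_eq_of_memB H hB (List.ne_nil_of_length_pos (hB.1 ▸ hn))
  have h₀ := hs.weight_append_singleton_le H (Or.inl rfl) (by rw [zero_div, digitInt_zero])
    (by rw [mul_div_cancel₀ _ hβ]; linarith) (n := n + 1)
  have h₁ := hs.weight_append_singleton_le H (Or.inr (Or.inl rfl)) (digitInt_a₁ H)
    (by rw [mul_div_cancel₀ _ hβ]; linarith [H.le_two_mul]) (n := n + 1)
  have h₂ := hs.weight_append_singleton_le H (Or.inr (Or.inr rfl)) (digitInt_a₂ H)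
    (by linarith [H.mul_le_add]) (n := n + 1)
  have hnn (x : ℝ) : 0 ≤ scaledWeight a₁ x / β ^ (n + 1) :=
    div_nonneg (scaledWeight_nonneg a₁ x) (pow_pos H.beta_pos _).le
  rw [tsum_weight_append_singleton H, hweight, ← ENNReal.ofReal_mul (contractionRate_nonneg β)]
  calc _ ≤ _ := add_le_add (add_le_add h₀ h₁) h₂
    _ = ENNReal.ofReal ((scaledWeight a₁ (β * min t (a₁ / β) - 0) +
          scaledWeight a₁ (β * min t (a₂ / β) - a₁) + scaledWeight a₁ (β * min t a₁ - a₂)) /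
          β ^ (n + 1)) := by
      rw [← ENNReal.ofReal_add (hnn _) (hnn _),
        ← ENNReal.ofReal_add (add_nonneg (hnn _) (hnn _)) (hnn _), add_div, add_div]
    _ ≤ _ := by
      refine ENNReal.ofReal_le_ofReal ?_
      rw [div_le_iff₀ (pow_pos H.beta_pos _), pow_succ]
      calc _ ≤ contractionRate β * (β * (t + a₁ / 2)) := scaledWeight_children_le H ht hta
        _ = _ := by field_simp

theorem potential_succ_le (H : Admissible β a₁ a₂) {n : ℕ} (hn : 1 ≤ n) :
    potential β a₁ a₂ (n + 1) ≤ ENNReal.ofReal (contractionRate β) * potential β a₁ a₂ n := by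
  have hinj : Function.Injective fun p : List ℝ × ℝ => p.1 ++ [p.2] := fun p q h => by
    obtain ⟨h₁, h₂⟩ := List.append_inj' h rfl
    exact Prod.ext h₁ (List.singleton_injective h₂)
  have hsupp : Function.support (weight β a₁ a₂ (n + 1)) ⊆
      range fun p : List ℝ × ℝ => p.1 ++ [p.2] := by
    intro v hv
    have hne : v ≠ [] :=
      List.ne_nil_of_length_pos ((memB_of_weight_ne_zero hv).1 ▸ Nat.succ_pos n)
    exact ⟨(v.dropLast, v.getLast hne), List.dropLast_append_getLast hne⟩
  calc potential β a₁ a₂ (n + 1)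
      = ∑' p : List ℝ × ℝ, weight β a₁ a₂ (n + 1) (p.1 ++ [p.2]) := (hinj.tsum_eq hsupp).symm
    _ = ∑' (w : List ℝ) (b : ℝ), weight β a₁ a₂ (n + 1) (w ++ [b]) :=
      ENNReal.tsum_prod (f := fun w b => weight β a₁ a₂ (n + 1) (w ++ [b]))
    _ ≤ ∑' w, ENNReal.ofReal (contractionRate β) * weight β a₁ a₂ n w :=
      ENNReal.tsum_le_tsum fun w => tsum_weight_append_singleton_le H hn w
    _ = ENNReal.ofReal (contractionRate β) * potential β a₁ a₂ n := ENNReal.tsum_mul_left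

theorem weight_ne_top (H : Admissible β a₁ a₂) {n : ℕ} (hn : 1 ≤ n) (w : List ℝ) :
    weight β a₁ a₂ n w ≠ ∞ := by
  by_cases hB : memB β a₁ a₂ n w
  · obtain ⟨l, t, hs⟩ := exists_cylShape H hB.2.1
    exact ne_top_of_le_ne_top ENNReal.ofReal_ne_top
      (hs.weight_le H (List.ne_nil_of_length_pos (hB.1 ▸ hn)))
  · simp [weight, hB]

theorem potential_one_ne_top (H : Admissible β a₁ a₂) : potential β a₁ a₂ 1 ≠ ∞ := by
  have hsupp : ∀ w ∉ ({[0], [a₁], [a₂]} : Finset (List ℝ)), weight β a₁ a₂ 1 w = 0 := by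
    intro w hw
    by_contra h
    obtain ⟨hlen, hword, -⟩ := memB_of_weight_ne_zero h
    obtain ⟨b, rfl⟩ := List.length_eq_one_iff.1 hlen
    rcases hword b (by simp) with rfl | rfl | rfl <;> simp at hw
  rw [potential, tsum_eq_sum hsupp]
  exact ENNReal.sum_ne_top.2 fun w _ => weight_ne_top H le_rfl w

theorem tendsto_potential (H : Admissible β a₁ a₂) :
    Tendsto (fun n => potential β a₁ a₂ (n + 1)) atTop (𝓝 0) := by
  set r := ENNReal.ofReal (contractionRate β)
  have hr : r < 1 := ENNReal.ofReal_lt_one.2 (contractionRate_lt_one H.one_lt)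
  have hbound (n : ℕ) : potential β a₁ a₂ (n + 1) ≤ r ^ n * potential β a₁ a₂ 1 := by
    induction n with
    | zero => simp
    | succ n ih =>
      calc potential β a₁ a₂ (n + 2) ≤ r * potential β a₁ a₂ (n + 1) :=
            potential_succ_le H (by omega)
        _ ≤ r * (r ^ n * potential β a₁ a₂ 1) := by gcongr
        _ = r ^ (n + 1) * potential β a₁ a₂ 1 := by ring
  have hlim := ENNReal.Tendsto.mul_const (ENNReal.tendsto_pow_atTop_nhds_zero_of_lt_one hr)
    (Or.inr (potential_one_ne_top H))
  rw [zero_mul] at hlim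
  exact tendsto_of_tendsto_of_tendsto_of_le_of_le tendsto_const_nhds hlim (fun _ => zero_le)
    hbound

end Potential

section Measurability

variable {β a₁ a₂ : ℝ}

theorem setOf_isWord_countable (a₁ a₂ : ℝ) : {w : List ℝ | isWord a₁ a₂ w}.Countable :=
  range_list_map_coe ({0, a₁, a₂} : Set ℝ) ▸ countable_range _

theorem measurable_greedyT (β a₁ a₂ : ℝ) : Measurable (greedyT β a₁ a₂) :=
  Measurable.ite measurableSet_Iio (measurable_const_mul β)
    (Measurable.ite measurableSet_Iio ((measurable_const_mul β).sub_const a₁)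
      ((measurable_const_mul β).sub_const a₂))

theorem measurableSet_cyl (β a₁ a₂ : ℝ) (w : List ℝ) : MeasurableSet (cyl β a₁ a₂ w) := by
  refine MeasurableSet.biInter (to_countable _) fun k _ => ?_
  refine (measurable_greedyT β a₁ a₂).iterate k ?_
  unfold digitInt
  split_ifs <;> exact measurableSet_Ico

theorem measurableSet_Dset (β a₁ a₂ : ℝ) (n : ℕ) : MeasurableSet (Dset β a₁ a₂ n) :=
  MeasurableSet.biUnion ((setOf_isWord_countable a₁ a₂).mono fun _ hw => hw.2.1)
    fun w _ => measurableSet_cyl β a₁ a₂ w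

theorem volume_biUnion_memB_le (n : ℕ) :
    volume (⋃ w ∈ {w | memB β a₁ a₂ n w}, cyl β a₁ a₂ w) ≤ potential β a₁ a₂ n :=
  calc volume (⋃ w ∈ {w | memB β a₁ a₂ n w}, cyl β a₁ a₂ w)
      ≤ ∑' w : {w | memB β a₁ a₂ n w}, volume (cyl β a₁ a₂ w) :=
        measure_biUnion_le _ ((setOf_isWord_countable a₁ a₂).mono fun _ hw => hw.2.1) _
    _ ≤ ∑' w : {w | memB β a₁ a₂ n w}, weight β a₁ a₂ n w :=
        ENNReal.tsum_le_tsum fun w => volume_cyl_le_weight w.2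
    _ ≤ potential β a₁ a₂ n := ENNReal.tsum_comp_le_tsum_of_injective Subtype.val_injective _

end Measurability

section FullCylinders

variable {β a₁ a₂ : ℝ}

theorem Dset_subset_Ico (H : Admissible β a₁ a₂) {n : ℕ} (hn : 1 ≤ n) :
    Dset β a₁ a₂ n ⊆ Ico 0 a₁ :=
  iUnion₂_subset fun _ hw => cyl_subset_Ico H hw.2.1 (List.ne_nil_of_length_pos (hw.1 ▸ hn))

theorem Ico_subset_iUnion_Dset_union (H : Admissible β a₁ a₂) {n : ℕ} (hn : 1 ≤ n) :
    Ico 0 a₁ ⊆ (⋃ k : ℕ, Dset β a₁ a₂ (k + 1)) ∪ ⋃ w ∈ {w | memB β a₁ a₂ n w}, cyl β a₁ a₂ w := by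
  classical
  intro x hx
  obtain ⟨w, hlen, hw, hxw⟩ := exists_mem_cyl H hx n
  have eq_take {v : List ℝ} (h : v <+: w) : v = w.take v.length := List.prefix_iff_eq_take.1 h
  by_cases hfull : ∃ j, 1 ≤ j ∧ j ≤ n ∧ isFull β a₁ a₂ (w.take j)
  · left
    obtain ⟨hj, hjn, hjfull⟩ := Nat.find_spec hfull
    have hlen' : (w.take (Nat.find hfull)).length = Nat.find hfull := by simp [hlen, hjn]
    refine mem_iUnion.2 ⟨Nat.find hfull - 1, ?_⟩
    rw [Nat.sub_add_cancel hj]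
    refine mem_iUnion₂.2 ⟨w.take (Nat.find hfull), ⟨hlen',
      fun c hc => hw c (List.mem_of_mem_take hc), hjfull, fun w' hne hpre hne' hfull' => ?_⟩,
      cyl_subset_of_prefix (List.take_prefix _ _) hxw⟩
    have hlt : w'.length < Nat.find hfull :=
      (hlen' ▸ hpre.length_le).lt_of_ne fun h => hne' (hpre.eq_of_length (hlen'.symm ▸ h))
    refine Nat.find_min hfull hlt ⟨List.length_pos_iff.2 hne, by omega, ?_⟩
    rwa [← eq_take (hpre.trans (List.take_prefix _ _))]
  · right
    push Not at hfull
    have hne : w ≠ [] := List.ne_nil_of_length_pos (hlen ▸ hn)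
    refine mem_iUnion₂.2 ⟨w, ⟨hlen, hw, volume_cyl_pos H hw hne hxw, ?_, ?_⟩, hxw⟩
    · simpa [← hlen] using hfull n hn le_rfl
    · intro w' hne' hpre _
      rw [eq_take hpre]
      exact hfull _ (List.length_pos_iff.2 hne') (hlen ▸ hpre.length_le)

theorem Dset_disjoint_of_lt (H : Admissible β a₁ a₂) {m n : ℕ} (hm : 1 ≤ m) (hmn : m < n) :
    Disjoint (Dset β a₁ a₂ m) (Dset β a₁ a₂ n) := by
  refine disjoint_left.2 fun x hxm hxn => ?_
  obtain ⟨w, ⟨hwl, hw, hwfull, -⟩, hxw⟩ := mem_iUnion₂.1 hxm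
  obtain ⟨v, ⟨hvl, hv, -, hvpre⟩, hxv⟩ := mem_iUnion₂.1 hxn
  have hpre : v.take m <+: v := List.take_prefix _ _
  have hlen : (v.take m).length = m := by simp [hvl, hmn.le]
  have heq : w = v.take m := eq_of_mem_cyl H hw (fun c hc => hv c (hpre.subset hc))
    (by rw [hwl, hlen]) hxw (cyl_subset_of_prefix hpre hxv)
  refine hvpre _ (List.ne_nil_of_length_pos (by omega)) hpre (fun h => ?_) (heq ▸ hwfull)
  rw [h, hvl] at hlen
  omega

theorem Dset_disjoint (H : Admissible β a₁ a₂) {m n : ℕ} (hm : 1 ≤ m) (hn : 1 ≤ n)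
    (hmn : m ≠ n) : Disjoint (Dset β a₁ a₂ m) (Dset β a₁ a₂ n) := by
  rcases hmn.lt_or_gt with h | h
  · exact Dset_disjoint_of_lt H hm h
  · exact (Dset_disjoint_of_lt H hn h).symm

theorem volume_iUnion_Dset (H : Admissible β a₁ a₂) :
    volume (⋃ n : ℕ, Dset β a₁ a₂ (n + 1)) = ENNReal.ofReal a₁ := by
  set U := ⋃ n : ℕ, Dset β a₁ a₂ (n + 1)
  have hI : volume (Ico 0 a₁) = ENNReal.ofReal a₁ := by rw [Real.volume_Ico, sub_zero]
  refine le_antisymm (hI ▸ measure_mono (iUnion_subset fun n => Dset_subset_Ico H n.succ_pos)) ?_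
  have hlim : Tendsto (fun n => volume U + potential β a₁ a₂ (n + 1)) atTop (𝓝 (volume U)) := by
    simpa using (tendsto_potential H).const_add (volume U)
  refine ge_of_tendsto' hlim fun n => ?_
  calc ENNReal.ofReal a₁ = volume (Ico 0 a₁) := hI.symm
    _ ≤ volume (U ∪ ⋃ w ∈ {w | memB β a₁ a₂ (n + 1) w}, cyl β a₁ a₂ w) :=
      measure_mono (Ico_subset_iUnion_Dset_union H n.succ_pos)
    _ ≤ volume U + volume (⋃ w ∈ {w | memB β a₁ a₂ (n + 1) w}, cyl β a₁ a₂ w) :=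
      measure_union_le _ _
    _ ≤ volume U + potential β a₁ a₂ (n + 1) := by gcongr; exact volume_biUnion_memB_le _

end FullCylinders

theorem stmt10_general (β a₁ a₂ : ℝ) (hβ1 : 1 < β)
    (ha₁ : 0 < a₁) (h12 : a₁ < a₂) (hc : condition6 β a₁ a₂) :
    (∀ m n : ℕ, 1 ≤ m → 1 ≤ n → m ≠ n →
      Disjoint (Dset β a₁ a₂ m) (Dset β a₁ a₂ n)) ∧
    (∑' n : ℕ, volume (Dset β a₁ a₂ (n + 1))) = ENNReal.ofReal a₁ ∧
    volume (⋃ n : ℕ, Dset β a₁ a₂ (n + 1)) = ENNReal.ofReal a₁ ∧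
    volume (Set.Ico (0 : ℝ) a₁) = ENNReal.ofReal a₁ := by
  have H := Admissible.of_condition6 hβ1 ha₁ h12 hc
  have hdisj : ∀ m n : ℕ, 1 ≤ m → 1 ≤ n → m ≠ n →
      Disjoint (Dset β a₁ a₂ m) (Dset β a₁ a₂ n) := fun _ _ => Dset_disjoint H
  refine ⟨hdisj, ?_, volume_iUnion_Dset H, by rw [Real.volume_Ico, sub_zero]⟩
  rw [← volume_iUnion_Dset H, measure_iUnion (fun i j hij => hdisj _ _ i.succ_pos j.succ_pos
    (by simpa using hij)) fun n => measurableSet_Dset β a₁ a₂ (n + 1)]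

/-- The sets `Dₙ`, `n ≥ 1`, are pairwise disjoint and
`λ(⋃_{n≥1} Dₙ) = Σ_{n≥1} λ(Dₙ) = λ([0, a₁)) = a₁`; in particular,
Lebesgue-almost every point of `[0, a₁)` lies in some full fundamental
interval. -/
theorem stmt10 (β a₁ a₂ : ℝ) (hβ1 : 1 < β) (hβ3 : β < 3)
    (ha₁ : 0 < a₁) (h12 : a₁ < a₂) (hc : condition6 β a₁ a₂) :
    (∀ m n : ℕ, 1 ≤ m → 1 ≤ n → m ≠ n →
      Disjoint (Dset β a₁ a₂ m) (Dset β a₁ a₂ n)) ∧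
    (∑' n : ℕ, volume (Dset β a₁ a₂ (n + 1))) = ENNReal.ofReal a₁ ∧
    volume (⋃ n : ℕ, Dset β a₁ a₂ (n + 1)) = ENNReal.ofReal a₁ ∧
    volume (Set.Ico (0 : ℝ) a₁) = ENNReal.ofReal a₁ :=
  stmt10_general β a₁ a₂ hβ1 ha₁ h12 hc
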